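/- Fix positive integers k ≤ t'. Let G be a graph where each vertex u is replaced by a gadget consisting of a center u₀ plus a path u₁,…,u_{t'+1} of 'yellow' vertices, with u₀ adjacent to u₁,…,u_{t'} (but not u_{t'+1}). Then in any color-preserving subgraph embedding g of the gadget graph G' into the gadget graph H' with |V(G')| = |V(H')|, centers map to centers, and whenever g(u₀) = v₀, we have g(u_i) = v_i for all 1 ≤ i ≤ t'+1. -/

import Mathlib

/-!
Colours force centers onto centers, so `u ↦ w` (where `g (u, 0) = (w, 0)`) is injective, hence
bijective as `|U| = |W|`. A center is adjacent only to the middle vertices `1, …, t'` of its own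
gadget, so `g` maps the middle of gadget `u` injectively, hence by counting onto, the middle of
gadget `w`. Injectivity then leaves the top vertex `(u, t' + 1)` nowhere to go but to a top vertex,
and the edge from `(u, t')` puts it into gadget `w`. Finally `g` maps the path `1 - ⋯ - (t' + 1)`
of gadget `u` injectively along the path of gadget `w`, fixing its end `t' + 1`, so it fixes every
vertex of the path.
-/

open Function

theorem Fin.iff_of_ite_castSucc_eq_ite {c : ℕ} {p q : Prop} [Decidable p] [Decidable q]
    {a b : Fin c}
    (h : (if p then a.castSucc else Fin.last c) = if q then b.castSucc else Fin.last c) :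
    p ↔ q := by
  split_ifs at h <;> simp_all [Fin.castSucc_ne_last, (Fin.castSucc_ne_last _).symm]

theorem Fin.eq_self_of_injective_of_consecutive {n a : ℕ} {φ : Fin (n + 1) → Fin (n + 1)}
    (hφ : Injective φ) (hlast : φ (Fin.last n) = Fin.last n)
    (hstep : ∀ i : Fin n, a ≤ i.val →
      (φ i.castSucc).val + 1 = (φ i.succ).val ∨ (φ i.succ).val + 1 = (φ i.castSucc).val)
    (i : Fin (n + 1)) (hi : a ≤ i.val) : φ i = i := by
  refine Fin.reverseInduction (motive := fun i => ∀ j, i ≤ j → a ≤ j.val → φ j = j)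
    (fun j hj _ => by rw [Fin.last_le_iff.1 hj, hlast]) (fun i ih j hij haj => ?_) i i le_rfl hi
  rcases hij.lt_or_eq with hlt | rfl
  · exact ih j (Fin.castSucc_lt_iff_succ_le.1 hlt) haj
  rw [Fin.val_castSucc] at haj
  have hsucc := ih i.succ le_rfl (by rw [Fin.val_succ]; omega)
  rcases hstep i haj with h | h <;> rw [hsucc, Fin.val_succ] at h
  · exact Fin.ext (by rw [Fin.val_castSucc]; omega)
  · -- `φ i.castSucc = i + 2`, a value `φ` already takes at `i + 2` by `ih`
    have hφφ := ih (φ i.castSucc) (by rw [Fin.le_def, Fin.val_succ]; omega) (by omega)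
    have := congrArg Fin.val (hφ hφφ)
    rw [Fin.val_castSucc] at this
    omega

theorem Fin.eq_zero_or_middle_or_eq_last {t : ℕ} (i : Fin (t + 2)) :
    i = 0 ∨ (1 ≤ i.val ∧ i.val ≤ t) ∨ i = Fin.last _ := by
  rw [Fin.ext_iff, Fin.ext_iff, Fin.val_zero, Fin.val_last]
  omega

def gadget (t : ℕ) : SimpleGraph (Fin (t + 2)) where
  Adj i j := (i.val = 0 ∧ 1 ≤ j.val ∧ j.val ≤ t) ∨ (j.val = 0 ∧ 1 ≤ i.val ∧ i.val ≤ t) ∨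
    (1 ≤ i.val ∧ 1 ≤ j.val ∧ (i.val + 1 = j.val ∨ j.val + 1 = i.val))
  symm := ⟨fun _ _ => by omega⟩
  loopless := ⟨fun _ => by omega⟩

section

variable {U W : Type*} {t : ℕ}

structure IsGadgetGraph (H : SimpleGraph (W × Fin (t + 2))) : Prop where
  adj_iff : ∀ w i j, H.Adj (w, i) (w, j) ↔ (gadget t).Adj i j
  middle_of_adj_of_ne : ∀ v w i j, v ≠ w → H.Adj (v, i) (w, j) →
    1 ≤ i.val ∧ i.val ≤ t ∧ 1 ≤ j.val ∧ j.val ≤ t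

namespace IsGadgetGraph

variable {H : SimpleGraph (W × Fin (t + 2))}

theorem fst_eq_and_middle_of_adj_center (hH : IsGadgetGraph H) {w : W} {y : W × Fin (t + 2)}
    (h : H.Adj (w, 0) y) : y.1 = w ∧ 1 ≤ y.2.val ∧ y.2.val ≤ t := by
  obtain ⟨v, j⟩ := y
  by_cases hvw : w = v
  · subst hvw
    have := (hH.adj_iff _ _ _).1 h
    simp only [gadget, Fin.val_zero, true_and] at this ⊢
    omega
  · exact absurd (hH.middle_of_adj_of_ne _ _ _ _ hvw h).1 (by simp)

theorem fst_eq_of_adj_last (hH : IsGadgetGraph H) {x y : W × Fin (t + 2)} (h : H.Adj x y)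
    (hy : y.2 = Fin.last _) : x.1 = y.1 := by
  by_contra hne
  have := (hH.middle_of_adj_of_ne _ _ _ _ hne h).2.2.2
  rw [hy, Fin.val_last] at this
  omega

theorem val_step_of_adj (hH : IsGadgetGraph H) {x y : W × Fin (t + 2)} (h : H.Adj x y)
    (hxy : x.1 = y.1) (hx : x.2 ≠ 0) (hy : y.2 ≠ 0) :
    x.2.val + 1 = y.2.val ∨ y.2.val + 1 = x.2.val := by
  obtain ⟨v, i⟩ := x
  obtain ⟨w, j⟩ := y
  dsimp only at hxy hx hy ⊢
  subst hxy
  have hadj := (hH.adj_iff _ _ _).1 h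
  have hi := Fin.val_ne_iff.2 hx
  have hj := Fin.val_ne_iff.2 hy
  simp only [gadget, Fin.val_zero] at hadj hi hj
  omega

end IsGadgetGraph

structure IsGadgetEmbedding (H : SimpleGraph (W × Fin (t + 2)))
    (g : U × Fin (t + 2) → W × Fin (t + 2)) : Prop where
  injective : Injective g
  snd_eq_zero_iff : ∀ x, (g x).2 = 0 ↔ x.2 = 0
  map_adj : ∀ u i j, (gadget t).Adj i j → H.Adj (g (u, i)) (g (u, j))

def centerMap (g : U × Fin (t + 2) → W × Fin (t + 2)) (u : U) : W := (g (u, 0)).1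

namespace IsGadgetEmbedding

variable {H : SimpleGraph (W × Fin (t + 2))} {g : U × Fin (t + 2) → W × Fin (t + 2)}

theorem map_center (hg : IsGadgetEmbedding H g) (u : U) : g (u, 0) = (centerMap g u, 0) :=
  Prod.ext rfl ((hg.snd_eq_zero_iff _).2 rfl)

theorem centerMap_bijective [Fintype U] [Fintype W] (hg : IsGadgetEmbedding H g)
    (hcard : Fintype.card U = Fintype.card W) : Bijective (centerMap g) := by
  refine (Fintype.bijective_iff_injective_and_card _).2 ⟨fun u u' h => ?_, hcard⟩
  have : g (u, 0) = g (u', 0) := by rw [hg.map_center, hg.map_center, h]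
  exact congrArg Prod.fst (hg.injective this)

theorem map_middle (hg : IsGadgetEmbedding H g) (hH : IsGadgetGraph H) (u : U) {i : Fin (t + 2)}
    (hi : 1 ≤ i.val) (hit : i.val ≤ t) :
    (g (u, i)).1 = centerMap g u ∧ 1 ≤ (g (u, i)).2.val ∧ (g (u, i)).2.val ≤ t := by
  have h := hg.map_adj u 0 i (Or.inl ⟨rfl, hi, hit⟩)
  rw [hg.map_center] at h
  exact hH.fst_eq_and_middle_of_adj_center h

theorem exists_middle_preimage (hg : IsGadgetEmbedding H g) (hH : IsGadgetGraph H) (u : U)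
    {j : Fin (t + 2)} (hj : 1 ≤ j.val) (hjt : j.val ≤ t) :
    ∃ i : Fin (t + 2), 1 ≤ i.val ∧ i.val ≤ t ∧ g (u, i) = (centerMap g u, j) := by
  let middle : Finset (Fin (t + 2)) := {i | 1 ≤ i.val ∧ i.val ≤ t}
  have hmem (i : Fin (t + 2)) : i ∈ (middle : Set (Fin (t + 2))) ↔ 1 ≤ i.val ∧ i.val ≤ t := by
    simp [middle]
  have hmaps : Set.MapsTo (fun i => (g (u, i)).2) middle middle := fun i hi =>
    (hmem _).2 (hg.map_middle hH u ((hmem i).1 hi).1 ((hmem i).1 hi).2).2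
  have hinj : Set.InjOn (fun i => (g (u, i)).2) middle := fun i hi i' hi' h => by
    refine congrArg Prod.snd (hg.injective (Prod.ext ?_ h))
    rw [(hg.map_middle hH u ((hmem i).1 hi).1 ((hmem i).1 hi).2).1,
      (hg.map_middle hH u ((hmem i').1 hi').1 ((hmem i').1 hi').2).1]
  obtain ⟨i, hi, hij⟩ :=
    Finset.surjOn_of_injOn_of_card_le _ hmaps hinj le_rfl ((hmem j).2 ⟨hj, hjt⟩)
  obtain ⟨hi, hit⟩ := (hmem i).1 hi
  exact ⟨i, hi, hit, Prod.ext (hg.map_middle hH u hi hit).1 hij⟩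

theorem snd_map_last [Fintype U] [Fintype W] (hg : IsGadgetEmbedding H g) (hH : IsGadgetGraph H)
    (hcard : Fintype.card U = Fintype.card W) (u : U) :
    (g (u, Fin.last _)).2 = Fin.last _ := by
  obtain h0 | ⟨hj, hjt⟩ | hlast := Fin.eq_zero_or_middle_or_eq_last (g (u, Fin.last _)).2
  · exact absurd ((hg.snd_eq_zero_iff _).1 h0) Fin.last_pos.ne'
  · -- the middle of the target gadget is already covered by the middle of some gadget `u'`
    obtain ⟨u', hu'⟩ := (hg.centerMap_bijective hcard).2 (g (u, Fin.last _)).1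
    obtain ⟨i, -, hit, hi⟩ := hg.exists_middle_preimage hH u' hj hjt
    rw [hu'] at hi
    have hi_last : i = Fin.last _ := (Prod.ext_iff.1 (hg.injective hi)).2
    rw [hi_last, Fin.val_last] at hit
    omega
  · exact hlast

theorem fst_map [Fintype U] [Fintype W] (hg : IsGadgetEmbedding H g) (hH : IsGadgetGraph H)
    (hcard : Fintype.card U = Fintype.card W) (ht : 1 ≤ t) (u : U) (i : Fin (t + 2)) :
    (g (u, i)).1 = centerMap g u := by
  obtain rfl | ⟨hi, hit⟩ | rfl := Fin.eq_zero_or_middle_or_eq_last i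
  · rw [hg.map_center]
  · exact (hg.map_middle hH u hi hit).1
  · have h := hg.map_adj u ⟨t, by omega⟩ (Fin.last _) (Or.inr (Or.inr ⟨ht, by simp, Or.inl rfl⟩))
    rw [← hH.fst_eq_of_adj_last h (hg.snd_map_last hH hcard u)]
    exact (hg.map_middle hH u (i := ⟨t, by omega⟩) ht le_rfl).1

theorem map_eq [Fintype U] [Fintype W] (hg : IsGadgetEmbedding H g) (hH : IsGadgetGraph H)
    (hcard : Fintype.card U = Fintype.card W) (ht : 1 ≤ t) (u : U) (i : Fin (t + 2)) :
    g (u, i) = (centerMap g u, i) := by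
  refine Prod.ext (hg.fst_map hH hcard ht u i) ?_
  by_cases hi : i = 0
  · rw [hi, hg.map_center]
  have hfst := hg.fst_map hH hcard ht u
  refine Fin.eq_self_of_injective_of_consecutive (φ := fun i => (g (u, i)).2) (a := 1)
    (fun i j h => congrArg Prod.snd (hg.injective (Prod.ext ((hfst i).trans (hfst j).symm) h)))
    (hg.snd_map_last hH hcard u) (fun j hj => ?_) i (Fin.pos_iff_ne_zero.2 hi)
  have h := hg.map_adj u j.castSucc j.succ (Or.inr (Or.inr ⟨hj, j.succ_pos, Or.inl rfl⟩))
  refine hH.val_step_of_adj h ((hfst _).trans (hfst _).symm) ?_ ?_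
  · rw [Ne, hg.snd_eq_zero_iff]
    exact Fin.ne_of_val_ne (by simp only [Fin.val_castSucc, Fin.val_zero]; omega)
  · rw [Ne, hg.snd_eq_zero_iff]
    exact Fin.succ_ne_zero j

end IsGadgetEmbedding

end

theorem stmt_19_general {U W : Type*} [Fintype U] [Fintype W] (c k t' : ℕ)
    (hk : 1 ≤ k) (hkt : k ≤ t')
    (colU : U → Fin c) (colW : W → Fin c)
    (G' : SimpleGraph (U × Fin (t' + 2))) (H' : SimpleGraph (W × Fin (t' + 2)))
    -- intra-gadget adjacency in G': the center (index 0) is adjacent to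
    -- indices 1..t', and the yellow vertices 1..t'+1 form a path:
    (hG_intra : ∀ (u : U) (i j : Fin (t' + 2)), G'.Adj (u, i) (u, j) ↔
      ((i.val = 0 ∧ 1 ≤ j.val ∧ j.val ≤ t') ∨
       (j.val = 0 ∧ 1 ≤ i.val ∧ i.val ≤ t') ∨
       (1 ≤ i.val ∧ 1 ≤ j.val ∧ (i.val + 1 = j.val ∨ j.val + 1 = i.val))))
    -- the same structure for H':
    (hH_intra : ∀ (w : W) (i j : Fin (t' + 2)), H'.Adj (w, i) (w, j) ↔
      ((i.val = 0 ∧ 1 ≤ j.val ∧ j.val ≤ t') ∨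
       (j.val = 0 ∧ 1 ≤ i.val ∧ i.val ≤ t') ∨
       (1 ≤ i.val ∧ 1 ≤ j.val ∧ (i.val + 1 = j.val ∨ j.val + 1 = i.val))))
    (hH_inter : ∀ (v w : W) (i j : Fin (t' + 2)), v ≠ w → H'.Adj (v, i) (w, j) →
      1 ≤ i.val ∧ i.val ≤ t' ∧ 1 ≤ j.val ∧ j.val ≤ t')
    -- |V(G')| = |V(H')|:
    (hcard : Fintype.card U = Fintype.card W)
    -- a color-preserving subgraph embedding (centers keep the original color,
    -- the other gadget vertices are yellow, i.e. colored `Fin.last c`):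
    (g : U × Fin (t' + 2) → W × Fin (t' + 2))
    (hinj : Function.Injective g)
    (hcol : ∀ x : U × Fin (t' + 2),
      (if (g x).2.val = 0 then (colW (g x).1).castSucc else Fin.last c) =
      (if x.2.val = 0 then (colU x.1).castSucc else Fin.last c))
    (hedge : ∀ x y : U × Fin (t' + 2), G'.Adj x y → H'.Adj (g x) (g y)) :
    ∀ u : U, ∃ w : W, g (u, (0 : Fin (t' + 2))) = (w, (0 : Fin (t' + 2))) ∧
      ∀ i : Fin (t' + 2), 1 ≤ i.val → g (u, i) = (w, i) := by
  have hH : IsGadgetGraph H' := ⟨hH_intra, hH_inter⟩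
  have hg : IsGadgetEmbedding H' g :=
    ⟨hinj, fun x => by simpa only [Fin.val_eq_zero_iff] using Fin.iff_of_ite_castSucc_eq_ite (hcol x),
      fun u i j h => hedge _ _ ((hG_intra u i j).2 h)⟩
  intro u
  exact ⟨centerMap g u, hg.map_eq hH hcard (hk.trans hkt) u 0,
    fun i _ => hg.map_eq hH hcard (hk.trans hkt) u i⟩

theorem stmt_19 {U W : Type*} [Fintype U] [Fintype W] (c k t' : ℕ)
    (hk : 1 ≤ k) (hkt : k ≤ t')
    (colU : U → Fin c) (colW : W → Fin c)
    (G' : SimpleGraph (U × Fin (t' + 2))) (H' : SimpleGraph (W × Fin (t' + 2)))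
    -- intra-gadget adjacency in G': the center (index 0) is adjacent to
    -- indices 1..t', and the yellow vertices 1..t'+1 form a path:
    (hG_intra : ∀ (u : U) (i j : Fin (t' + 2)), G'.Adj (u, i) (u, j) ↔
      ((i.val = 0 ∧ 1 ≤ j.val ∧ j.val ≤ t') ∨
       (j.val = 0 ∧ 1 ≤ i.val ∧ i.val ≤ t') ∨
       (1 ≤ i.val ∧ 1 ≤ j.val ∧ (i.val + 1 = j.val ∨ j.val + 1 = i.val))))
    -- inter-gadget edges only between yellow vertices with indices in [1, t']:
    (hG_inter : ∀ (u v : U) (i j : Fin (t' + 2)), u ≠ v → G'.Adj (u, i) (v, j) →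
      1 ≤ i.val ∧ i.val ≤ t' ∧ 1 ≤ j.val ∧ j.val ≤ t')
    -- the same structure for H':
    (hH_intra : ∀ (w : W) (i j : Fin (t' + 2)), H'.Adj (w, i) (w, j) ↔
      ((i.val = 0 ∧ 1 ≤ j.val ∧ j.val ≤ t') ∨
       (j.val = 0 ∧ 1 ≤ i.val ∧ i.val ≤ t') ∨
       (1 ≤ i.val ∧ 1 ≤ j.val ∧ (i.val + 1 = j.val ∨ j.val + 1 = i.val))))
    (hH_inter : ∀ (v w : W) (i j : Fin (t' + 2)), v ≠ w → H'.Adj (v, i) (w, j) →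
      1 ≤ i.val ∧ i.val ≤ t' ∧ 1 ≤ j.val ∧ j.val ≤ t')
    -- |V(G')| = |V(H')|:
    (hcard : Fintype.card U = Fintype.card W)
    -- a color-preserving subgraph embedding (centers keep the original color,
    -- the other gadget vertices are yellow, i.e. colored `Fin.last c`):
    (g : U × Fin (t' + 2) → W × Fin (t' + 2))
    (hinj : Function.Injective g)
    (hcol : ∀ x : U × Fin (t' + 2),
      (if (g x).2.val = 0 then (colW (g x).1).castSucc else Fin.last c) =
      (if x.2.val = 0 then (colU x.1).castSucc else Fin.last c))
    (hedge : ∀ x y : U × Fin (t' + 2), G'.Adj x y → H'.Adj (g x) (g y)) :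
    ∀ u : U, ∃ w : W, g (u, (0 : Fin (t' + 2))) = (w, (0 : Fin (t' + 2))) ∧
      ∀ i : Fin (t' + 2), 1 ≤ i.val → g (u, i) = (w, i) :=
  stmt_19_general c k t' hk hkt colU colW G' H' hG_intra hH_intra hH_inter hcard g hinj hcol hedge
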